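/- Continuity of the dispatch map under strong convexity: let x*(η) = argmin{c(x) : x ∈ X(η)} where c is μ-strongly convex and X(η) = {x : Ax ≤ b(η)} with b Lipschitz and X(η) nonempty for all η in a set U; if the feasible-set multifunction is Lipschitz in Hausdorff distance with constant κ (i.e., d_H(X(η₁), X(η₂)) ≤ κ‖η₁ − η₂‖), then x* is Hölder continuous on U: ‖x*(η₁) − x*(η₂)‖ ≤ sqrt((2G/μ)·κ‖η₁ − η₂‖) + κ‖η₁ − η₂‖, where G bounds the gradient of c on the relevant region. -/

import Mathlib

/-!
Assume `c (x*(η₂)) ≤ c (x*(η₁))` and let `y ∈ X(η₁)` be a point nearest to `x*(η₂)`, so that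
`‖y - x*(η₂)‖ ≤ δ := κ‖η₁ - η₂‖`. Quadratic growth of the strongly convex `c` at its constrained
minimizer `x*(η₁)` and the first-order convexity bound at `y` give
`μ/2 ‖y - x*(η₁)‖² ≤ c y - c (x*(η₁)) ≤ c y - c (x*(η₂)) ≤ ‖∇c y‖ ‖y - x*(η₂)‖ ≤ G δ`,
and the triangle inequality through `y` finishes. The same two estimates put each `X(η)` inside
the ball of radius `2G/μ` around `x*(η)`, so Hausdorff distances are finite and do bound
nearest-point distances.
-/

open Metric Set

section Convexity

variable {E : Type*} [NormedAddCommGroup E] [NormedSpace ℝ E] {s : Set E} {f : E → ℝ}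
  {f' : E →L[ℝ] ℝ} {μ : ℝ} {x y : E}

theorem ConvexOn.add_le_of_hasFDerivAt (hf : ConvexOn ℝ s f) (hx : x ∈ s) (hy : y ∈ s)
    (hf' : HasFDerivAt f f' x) : f x + f' (y - x) ≤ f y := by
  set L : ℝ →ᵃ[ℝ] E := AffineMap.lineMap x y
  have hline : ConvexOn ℝ (L ⁻¹' s) (f ∘ L) := hf.comp_affineMap L
  have hderiv : HasDerivAt (f ∘ L) (f' (y - x)) 0 :=
    (by simpa [L] using hf' : HasFDerivAt f f' (L 0)).comp_hasDerivAt 0 AffineMap.hasDerivAt_lineMap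
  have hslope := hline.le_slope_of_hasDerivAt (x := 0) (y := 1)
    (by simpa [L] using hx) (by simpa [L] using hy) zero_lt_one hderiv
  simp only [slope, Function.comp_apply, L, AffineMap.lineMap_apply_zero,
    AffineMap.lineMap_apply_one, sub_zero, inv_one, one_smul, vsub_eq_sub] at hslope
  linarith

theorem StrongConvexOn.add_sq_le_of_isMinOn (hf : StrongConvexOn s μ f) (hx : x ∈ s)
    (hmin : IsMinOn f s x) (hy : y ∈ s) : f x + μ / 2 * ‖y - x‖ ^ 2 ≤ f y := by
  set φ := μ / 2 * ‖y - x‖ ^ 2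
  -- minimality at `t • x + (1 - t) • y` against strong convexity, then `t → 1`
  have hIoo : Ioo (0 : ℝ) 1 ⊆ {t | t * φ ≤ f y - f x} := by
    rintro t ⟨ht₀, ht₁⟩
    have hconv := hf.2 hx hy ht₀.le (sub_pos.2 ht₁).le (add_sub_cancel t 1)
    have hmin' := isMinOn_iff.1 hmin _ (hf.1 hx hy ht₀.le (sub_pos.2 ht₁).le (add_sub_cancel t 1))
    simp only [smul_eq_mul, norm_sub_rev x y] at hconv
    have hscaled : (1 - t) * (t * φ) ≤ (1 - t) * (f y - f x) := by simp only [φ]; linarith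
    exact le_of_mul_le_mul_left hscaled (sub_pos.2 ht₁)
  have hclosed : IsClosed {t : ℝ | t * φ ≤ f y - f x} := isClosed_le (by fun_prop) continuous_const
  have h1 : (1 : ℝ) ∈ closure (Ioo 0 1) := by
    rw [closure_Ioo zero_ne_one]; exact ⟨zero_le_one, le_rfl⟩
  have hlimit := hclosed.closure_subset_iff.2 hIoo h1
  simp only [mem_ofPred_eq, one_mul] at hlimit
  linarith

theorem StrongConvexOn.subset {t : Set E} (hf : StrongConvexOn t μ f) (hst : s ⊆ t)
    (hs : Convex ℝ s) : StrongConvexOn s μ f :=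
  ⟨hs, fun _ hx _ hy => hf.2 (hst hx) (hst hy)⟩

end Convexity

section Gradient

variable {E : Type*} [NormedAddCommGroup E] [InnerProductSpace ℝ E] [CompleteSpace E]
  {s : Set E} {f : E → ℝ} {g : E → E} {μ G δ : ℝ} {x y z : E}

theorem ConvexOn.sub_le_norm_mul_of_hasGradientAt {v : E} (hf : ConvexOn ℝ s f) (hx : x ∈ s)
    (hy : y ∈ s) (hv : HasGradientAt f v x) : f x - f y ≤ ‖v‖ * ‖x - y‖ := by
  have h := hf.add_le_of_hasFDerivAt hx hy hv.hasFDerivAt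
  rw [InnerProductSpace.toDual_apply_apply, ← neg_sub x y, inner_neg_right] at h
  linarith [real_inner_le_norm v (x - y)]

theorem StrongConvexOn.subset_closedBall_of_isMinOn (hf : StrongConvexOn s μ f) (hμ : 0 < μ)
    (hx : x ∈ s) (hmin : IsMinOn f s x) (hgrad : ∀ y ∈ s, HasGradientAt f (g y) y)
    (hG : ∀ y ∈ s, ‖g y‖ ≤ G) : s ⊆ closedBall x (2 * G / μ) := by
  intro y hy
  have hgrowth := hf.add_sq_le_of_isMinOn hx hmin hy
  have hslope := (hf.convexOn fun r => by positivity).sub_le_norm_mul_of_hasGradientAt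
    hy hx (hgrad y hy)
  have hgG := hG y hy
  rw [mem_closedBall, dist_eq_norm]
  rcases (norm_nonneg (y - x)).eq_or_lt with h0 | hpos
  · rw [← h0]; exact div_nonneg (by linarith [norm_nonneg (g y)]) hμ.le
  · rw [le_div_iff₀ hμ]
    nlinarith

theorem StrongConvexOn.norm_sub_le_of_isMinOn_of_infDist_le [ProperSpace E]
    (hf : StrongConvexOn univ μ f) (hμ : 0 < μ) (hs : Convex ℝ s) (hs_closed : IsClosed s)
    (hx : x ∈ s) (hmin : IsMinOn f s x) (hgrad : ∀ y ∈ s, HasGradientAt f (g y) y)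
    (hG : ∀ y ∈ s, ‖g y‖ ≤ G) (hle : f z ≤ f x) (hδ : infDist z s ≤ δ) :
    ‖x - z‖ ≤ √(2 * G / μ * δ) + δ := by
  obtain ⟨y, hy, hyz⟩ := hs_closed.exists_infDist_eq_dist ⟨x, hx⟩ z
  have hzy : ‖y - z‖ ≤ δ := by rwa [← dist_eq_norm, dist_comm, ← hyz]
  have hgrowth := (hf.subset (subset_univ s) hs).add_sq_le_of_isMinOn hx hmin hy
  have hslope := (hf.convexOn fun r => by positivity).sub_le_norm_mul_of_hasGradientAt
    (mem_univ y) (mem_univ z) (hgrad y hy)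
  have hgδ : ‖g y‖ * ‖y - z‖ ≤ G * δ :=
    mul_le_mul (hG y hy) hzy (norm_nonneg _) ((norm_nonneg _).trans (hG y hy))
  have hyx : ‖y - x‖ ≤ √(2 * G / μ * δ) := by
    apply Real.le_sqrt_of_sq_le
    rw [div_mul_eq_mul_div, le_div_iff₀ hμ]
    nlinarith
  calc ‖x - z‖ ≤ ‖x - y‖ + ‖y - z‖ := norm_sub_le_norm_sub_add_norm_sub x y z
    _ ≤ √(2 * G / μ * δ) + δ := by rw [norm_sub_rev x y]; exact add_le_add hyx hzy

end Gradient

section Polyhedron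

variable {m n : Type*} [Fintype n] (A : Matrix m n ℝ) (b : m → ℝ)

theorem isClosed_polyhedron :
    IsClosed {x : EuclideanSpace ℝ n | ∀ i, ∑ j, A i j * x j ≤ b i} := by
  simp only [ofPred_forall]
  exact isClosed_iInter fun i => isClosed_le (by fun_prop) continuous_const

theorem convex_polyhedron :
    Convex ℝ {x : EuclideanSpace ℝ n | ∀ i, ∑ j, A i j * x j ≤ b i} := by
  simp only [ofPred_forall]
  refine convex_iInter fun i => convex_halfSpace_le ⟨fun u v => ?_, fun a u => ?_⟩ (b i)
  · simp only [PiLp.add_apply, mul_add, Finset.sum_add_distrib]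
  · simp only [PiLp.smul_apply, smul_eq_mul, Finset.mul_sum, mul_left_comm]

end Polyhedron

theorem dispatch_holder_continuous_general
    (K N M : ℕ) (μ G κ : ℝ) (hμ : 0 < μ)
    (c : EuclideanSpace ℝ (Fin N) → ℝ)
    (g : EuclideanSpace ℝ (Fin N) → EuclideanSpace ℝ (Fin N))
    (hgrad : ∀ x, HasGradientAt c (g x) x)
    (hsc : StrongConvexOn Set.univ μ c)
    (U : Set (EuclideanSpace ℝ (Fin K)))
    (A : Matrix (Fin M) (Fin N) ℝ)
    (b : EuclideanSpace ℝ (Fin K) → (Fin M → ℝ))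
    (X : EuclideanSpace ℝ (Fin K) → Set (EuclideanSpace ℝ (Fin N)))
    (hX : ∀ η, X η = {x | ∀ i, (∑ j, A i j * x j) ≤ b η i})
    (hGbound : ∀ η ∈ U, ∀ x ∈ X η, ‖g x‖ ≤ G)
    (hHaus : ∀ η₁ ∈ U, ∀ η₂ ∈ U, hausdorffDist (X η₁) (X η₂) ≤ κ * ‖η₁ - η₂‖)
    (xstar : EuclideanSpace ℝ (Fin K) → EuclideanSpace ℝ (Fin N))
    -- `xstar η` is the unique minimizer of `c` over `X η`
    (hopt : ∀ η ∈ U, xstar η ∈ X η ∧ ∀ x ∈ X η, c (xstar η) ≤ c x) :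
    ∀ η₁ ∈ U, ∀ η₂ ∈ U,
      ‖xstar η₁ - xstar η₂‖
        ≤ Real.sqrt ((2 * G / μ) * (κ * ‖η₁ - η₂‖)) + κ * ‖η₁ - η₂‖ := by
  have hclosed η : IsClosed (X η) := hX η ▸ isClosed_polyhedron A (b η)
  have hconvex η : Convex ℝ (X η) := hX η ▸ convex_polyhedron A (b η)
  have hmin η (hη : η ∈ U) : IsMinOn c (X η) (xstar η) := isMinOn_iff.2 (hopt η hη).2
  have hbdd η (hη : η ∈ U) : Bornology.IsBounded (X η) :=
    isBounded_closedBall.subset <|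
      (hsc.subset (subset_univ _) (hconvex η)).subset_closedBall_of_isMinOn hμ (hopt η hη).1
        (hmin η hη) (fun y _ => hgrad y) (hGbound η hη)
  intro η₁ hη₁ η₂ hη₂
  wlog hle : c (xstar η₂) ≤ c (xstar η₁) generalizing η₁ η₂
  · rw [norm_sub_rev, norm_sub_rev η₁]
    exact this η₂ hη₂ η₁ hη₁ (le_of_not_ge hle)
  have hfin : hausdorffEDist (X η₂) (X η₁) ≠ ⊤ :=
    hausdorffEDist_ne_top_of_nonempty_of_bounded ⟨_, (hopt η₂ hη₂).1⟩ ⟨_, (hopt η₁ hη₁).1⟩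
      (hbdd η₂ hη₂) (hbdd η₁ hη₁)
  have hδ : infDist (xstar η₂) (X η₁) ≤ κ * ‖η₁ - η₂‖ :=
    (infDist_le_hausdorffDist_of_mem (hopt η₂ hη₂).1 hfin).trans
      (hausdorffDist_comm.trans_le (hHaus η₁ hη₁ η₂ hη₂))
  exact hsc.norm_sub_le_of_isMinOn_of_infDist_le hμ (hconvex η₁) (hclosed η₁) (hopt η₁ hη₁).1
    (hmin η₁ hη₁) (fun y _ => hgrad y) (hGbound η₁ hη₁) hle hδ

/-- Continuity (Hölder-type) of the dispatch map under strong convexity: if `c` is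
`μ`-strongly convex with gradient bounded by `G` on the feasible sets, and the
feasible-set multifunction `X(η) = {x | Ax ≤ b(η)}` is `κ`-Lipschitz in Hausdorff
distance, then `‖x*(η₁) − x*(η₂)‖ ≤ √((2G/μ)·κ‖η₁ − η₂‖) + κ‖η₁ − η₂‖`. -/
theorem dispatch_holder_continuous
    (K N M : ℕ) (μ G κ : ℝ) (hμ : 0 < μ) (hG : 0 ≤ G) (hκ : 0 ≤ κ)
    (c : EuclideanSpace ℝ (Fin N) → ℝ)
    (g : EuclideanSpace ℝ (Fin N) → EuclideanSpace ℝ (Fin N))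
    (hgrad : ∀ x, HasGradientAt c (g x) x)
    (hsc : StrongConvexOn Set.univ μ c)
    (U : Set (EuclideanSpace ℝ (Fin K)))
    (A : Matrix (Fin M) (Fin N) ℝ)
    (b : EuclideanSpace ℝ (Fin K) → (Fin M → ℝ))
    (X : EuclideanSpace ℝ (Fin K) → Set (EuclideanSpace ℝ (Fin N)))
    (hX : ∀ η, X η = {x | ∀ i, (∑ j, A i j * x j) ≤ b η i})
    (hXne : ∀ η ∈ U, (X η).Nonempty)
    (hGbound : ∀ η ∈ U, ∀ x ∈ X η, ‖g x‖ ≤ G)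
    (hHaus : ∀ η₁ ∈ U, ∀ η₂ ∈ U, hausdorffDist (X η₁) (X η₂) ≤ κ * ‖η₁ - η₂‖)
    (xstar : EuclideanSpace ℝ (Fin K) → EuclideanSpace ℝ (Fin N))
    -- `xstar η` is the unique minimizer of `c` over `X η`
    (hopt : ∀ η ∈ U, xstar η ∈ X η ∧ ∀ x ∈ X η, c (xstar η) ≤ c x) :
    ∀ η₁ ∈ U, ∀ η₂ ∈ U,
      ‖xstar η₁ - xstar η₂‖
        ≤ Real.sqrt ((2 * G / μ) * (κ * ‖η₁ - η₂‖)) + κ * ‖η₁ - η₂‖ :=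
  dispatch_holder_continuous_general K N M μ G κ hμ c g hgrad hsc U A b X hX hGbound hHaus xstar
    hopt
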